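/- arXiv:0807.0595 — 6 statements merged into one kernel-verified Lean document; each statement's English description precedes it below -/
import Mathlib

section
/- Let F be a field and let f(x) = x^m − σ_{m−1}x^{m−1} − ⋯ − σ_1 x − σ_0 ∈ F[x] with σ_0 ≠ 0 have m distinct zeros ξ_0, …, ξ_{m−1} (in a splitting field), all of the same finite multiplicative order n. Then ord(f) = n, and every f-sequence u in any extension field of F with (u_0, …, u_{m−1}) ≠ (0, …, 0) has smallest period per(u) = n. -/
open Polynomial

/-- The subgroup `⟨ξ⟩ = {1, ξ, ξ², …}` of powers of an element `ξ`. -/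
def powersOf {E : Type*} [Monoid E] (ξ : E) : Set E := {x | ∃ k : ℕ, x = ξ ^ k}

/-- The map `x ↦ L₀x + L₁x^q + ⋯ + L_{m-1}x^{q^{m-1}}` given by the `q`-polynomial
with coefficient vector `c`. -/
def qPolyMap {E : Type*} [Field E] (q : ℕ) {m : ℕ} (c : Fin m → E) (x : E) : E :=
  ∑ i : Fin m, c i * x ^ q ^ (i : ℕ)

/-- `u` is a linear recurring sequence (an `f`-sequence) with characteristic polynomial
`f = xᵐ - σ_{m-1}x^{m-1} - ⋯ - σ₀`, i.e. `u_{k+m} = σ_{m-1}u_{k+m-1} + ⋯ + σ₀u_k`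
where `σᵢ = -(f.coeff i)`. -/
def IsLRS {F E : Type*} [Field F] [Field E] [Algebra F E] (f : Polynomial F) (u : ℕ → E) : Prop :=
  ∀ k : ℕ, u (k + f.natDegree) =
    ∑ i ∈ Finset.range f.natDegree, algebraMap F E (-(f.coeff i)) * u (k + i)

/-- The `q`-order of `ξ` over `F`: the least `d > 0` with `ξ ^ d ∈ F`. -/
noncomputable def qOrder (F : Type*) {E : Type*} [Field F] [Field E] [Algebra F E] (ξ : E) : ℕ :=
  sInf {d : ℕ | 0 < d ∧ ξ ^ d ∈ Set.range (algebraMap F E)}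

/-- `ξ` is nonstandard of degree `m` over `F`: its minimal polynomial `f` over `F` has
degree `m`, and `⟨ξ⟩` can be generated by an `f`-sequence `u` of smallest period `|⟨ξ⟩|`
with `u 0 = 1` and `(u_0, …, u_{m-1}) ≠ (1, ζ, …, ζ^{m-1})` for every zero `ζ` of `f`. -/
def IsNonstandard (F : Type*) {E : Type*} [Field F] [Field E] [Algebra F E]
    (m : ℕ) (ξ : E) : Prop :=
  (minpoly F ξ).natDegree = m ∧
  ∃ u : ℕ → E, IsLRS (minpoly F ξ) u ∧
    IsLeast {p : ℕ | 0 < p ∧ ∀ k, u (k + p) = u k} (orderOf ξ) ∧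
    Set.range u = powersOf ξ ∧
    u 0 = 1 ∧
    ∀ ζ : E, (aeval ζ) (minpoly F ξ) = 0 → ∃ i : Fin m, u (i : ℕ) ≠ ζ ^ (i : ℕ)

/-!
Let `S` be the shift operator on sequences. An `f`-sequence `u` satisfies `f(S) u = 0`, and `p` is
a period of `u` iff `(Xᵖ - 1)(S) u = 0`. As the zeros `ξᵢ` of `f` are distinct and satisfy
`ξᵢⁿ = 1`, `f ∣ Xⁿ - 1`; so `n` is a period of `u`, and `ord f ≤ n`, while `f ∣ X^N - 1` forces
`ξᵢ^N = 1`, hence `n ≤ N`. If `p` is a period of `u ≠ 0`, then `f` and `Xᵖ - 1` are not coprime,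
since a Bézout identity would give `u = 0`; so they share a zero `ξᵢ`, and `n = ord ξᵢ ≤ p`.
-/

section Shift

variable (F M : Type*) [CommSemiring F] [AddCommMonoid M] [Module F M]

def seqShift : Module.End F (ℕ → M) := LinearMap.funLeft F M Nat.succ

variable {F M}

theorem seqShift_pow_apply (p : ℕ) (v : ℕ → M) (k : ℕ) :
    (seqShift F M ^ p) v k = v (k + p) := by
  induction p generalizing v with
  | zero => rfl
  | succ p ih =>
    rw [pow_succ, Module.End.mul_apply, ih]
    rfl

theorem aeval_seqShift_apply (g : F[X]) (v : ℕ → M) (k : ℕ) :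
    aeval (seqShift F M) g v k = ∑ i ∈ Finset.range (g.natDegree + 1), g.coeff i • v (k + i) := by
  simp only [aeval_eq_sum_range, LinearMap.coe_sum, Finset.sum_apply, LinearMap.smul_apply,
    Pi.smul_apply, seqShift_pow_apply]

end Shift

theorem aeval_seqShift_X_pow_sub_one_eq_zero_iff {F M : Type*} [CommRing F] [AddCommGroup M]
    [Module F M] (p : ℕ) (v : ℕ → M) :
    aeval (seqShift F M) ((X : F[X]) ^ p - 1) v = 0 ↔ ∀ k, v (k + p) = v k := by
  simp only [funext_iff, map_sub, map_pow, aeval_X, map_one, LinearMap.sub_apply,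
    Module.End.one_apply, seqShift_pow_apply, sub_eq_zero]

namespace IsLRS

variable {F L : Type*} [Field F] [Field L] [Algebra F L] {f : F[X]} {u : ℕ → L}

theorem aeval_seqShift_eq_zero (hu : IsLRS f u) (hmon : f.Monic) :
    aeval (seqShift F L) f u = 0 := by
  funext k
  rw [Pi.zero_apply, aeval_seqShift_apply, Finset.sum_range_succ, hmon.coeff_natDegree, one_smul,
    hu k, ← Finset.sum_add_distrib]
  refine Finset.sum_eq_zero fun i _ => ?_
  rw [Algebra.smul_def, map_neg, neg_mul, add_neg_cancel]

theorem periodic_of_dvd (hu : IsLRS f u) (hmon : f.Monic) {N : ℕ} (hf : f ∣ X ^ N - 1) :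
    ∀ k, u (k + N) = u k := by
  obtain ⟨c, hc⟩ := hf
  rw [← aeval_seqShift_X_pow_sub_one_eq_zero_iff (F := F), hc, mul_comm, map_mul,
    Module.End.mul_apply, hu.aeval_seqShift_eq_zero hmon, map_zero]

theorem eq_zero_of_isCoprime (hu : IsLRS f u) (hmon : f.Monic) {p : ℕ}
    (hper : ∀ k, u (k + p) = u k) (hcop : IsCoprime f (X ^ p - 1)) : u = 0 :=
  Submodule.disjoint_def.1 (disjoint_ker_aeval_of_isCoprime (seqShift F L) hcop) u
    (hu.aeval_seqShift_eq_zero hmon) ((aeval_seqShift_X_pow_sub_one_eq_zero_iff p u).2 hper)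

end IsLRS

section Roots

variable {F E : Type*} [Field F] [Field E] [Algebra F E]

theorem pow_eq_one_of_aeval_eq_zero {g : F[X]} {ζ : E} (hζ : aeval ζ g = 0) {N : ℕ}
    (hg : g ∣ X ^ N - 1) : ζ ^ N = 1 := by
  simpa [sub_eq_zero] using aeval_eq_zero_of_dvd_aeval_eq_zero hg hζ

variable {m : ℕ} {f : F[X]} {ξ : Fin m → E}

theorem aeval_eq_zero_of_map_eq_prod (hsplit : f.map (algebraMap F E) = ∏ i, (X - C (ξ i)))
    (i : Fin m) : aeval (ξ i) f = 0 := by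
  rw [aeval_def, ← eval_map, hsplit, eval_prod]
  exact Finset.prod_eq_zero (Finset.mem_univ i) (by simp)

theorem dvd_X_pow_sub_one_of_map_eq_prod (hsplit : f.map (algebraMap F E) = ∏ i, (X - C (ξ i)))
    (hinj : Function.Injective ξ) {N : ℕ} (hN : ∀ i, ξ i ^ N = 1) : f ∣ X ^ N - 1 := by
  rw [← map_dvd_map' (algebraMap F E), Polynomial.map_sub, Polynomial.map_pow, map_X,
    Polynomial.map_one, hsplit]
  refine Finset.prod_dvd_of_coprime (fun a _ b _ hab => pairwise_coprime_X_sub_C hinj hab)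
    fun i _ => ?_
  simp [dvd_iff_isRoot, hN i]

theorem exists_aeval_eq_zero_of_not_isCoprime
    (hsplit : f.map (algebraMap F E) = ∏ i, (X - C (ξ i))) {g : F[X]} (hg : ¬IsCoprime f g) :
    ∃ i, aeval (ξ i) g = 0 := by
  contrapose! hg
  rw [← isCoprime_map (algebraMap F E), hsplit]
  refine IsCoprime.prod_left fun i _ =>
    ((irreducible_X_sub_C (ξ i)).isCoprime_or_dvd _).resolve_right ?_
  rw [dvd_iff_isRoot, IsRoot, eval_map, ← aeval_def]
  exact hg i

end Roots

theorem lrs_period_eq_of_distinct_roots_general {F E L : Type*} [Field F] [Field E] [Algebra F E]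
    [Field L] [Algebra F L]
    (m : ℕ) (f : Polynomial F) (hmon : f.Monic)
    (ξ : Fin m → E) (hinj : Function.Injective ξ)
    (hsplit : f.map (algebraMap F E) = ∏ i : Fin m, (X - C (ξ i)))
    (n : ℕ) (hn : 0 < n) (hord : ∀ i : Fin m, orderOf (ξ i) = n)
    (u : ℕ → L) (hu : IsLRS f u) (hnz : ∃ i : Fin m, u (i : ℕ) ≠ 0) :
    IsLeast {N : ℕ | 0 < N ∧ f ∣ (X : Polynomial F) ^ N - 1} n ∧
    IsLeast {p : ℕ | 0 < p ∧ ∀ k, u (k + p) = u k} n := by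
  obtain ⟨j, hj⟩ := hnz
  have le_of_pow_eq_one (i : Fin m) {N : ℕ} (hN : 0 < N) (h : ξ i ^ N = 1) : n ≤ N :=
    hord i ▸ orderOf_le_of_pow_eq_one hN h
  have hdvd : f ∣ X ^ n - 1 :=
    dvd_X_pow_sub_one_of_map_eq_prod hsplit hinj fun i => hord i ▸ pow_orderOf_eq_one (ξ i)
  refine ⟨⟨⟨hn, hdvd⟩, ?_⟩, ⟨hn, hu.periodic_of_dvd hmon hdvd⟩, ?_⟩
  · rintro N ⟨hN, hfN⟩
    exact le_of_pow_eq_one j hN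
      (pow_eq_one_of_aeval_eq_zero (aeval_eq_zero_of_map_eq_prod hsplit j) hfN)
  · rintro p ⟨hp, hper⟩
    have hncop : ¬IsCoprime f (X ^ p - 1) := fun hcop =>
      hj (congrFun (hu.eq_zero_of_isCoprime hmon hper hcop) j)
    obtain ⟨i, hi⟩ := exists_aeval_eq_zero_of_not_isCoprime hsplit hncop
    exact le_of_pow_eq_one i hp (by simpa [sub_eq_zero] using hi)

/-- if `f` (monic, degree `m`, `σ₀ ≠ 0`) has `m` distinct zeros
`ξ₀, …, ξ_{m-1}` in a splitting field `E`, all of the same finite multiplicative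
order `n`, then `ord f = n` and every `f`-sequence `u` in any extension field `L`
of `F` with `(u_0, …, u_{m-1}) ≠ (0, …, 0)` has smallest period `n`. -/
theorem lrs_period_eq_of_distinct_roots {F E L : Type*} [Field F] [Field E] [Algebra F E]
    [Field L] [Algebra F L]
    (m : ℕ) (hm : 0 < m) (f : Polynomial F) (hmon : f.Monic) (hdeg : f.natDegree = m)
    (h0 : f.coeff 0 ≠ 0)
    (ξ : Fin m → E) (hinj : Function.Injective ξ)
    (hsplit : f.map (algebraMap F E) = ∏ i : Fin m, (X - C (ξ i)))
    (n : ℕ) (hn : 0 < n) (hord : ∀ i : Fin m, orderOf (ξ i) = n)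
    (u : ℕ → L) (hu : IsLRS f u) (hnz : ∃ i : Fin m, u (i : ℕ) ≠ 0) :
    IsLeast {N : ℕ | 0 < N ∧ f ∣ (X : Polynomial F) ^ N - 1} n ∧
    IsLeast {p : ℕ | 0 < p ∧ ∀ k, u (k + p) = u k} n :=
  lrs_period_eq_of_distinct_roots_general m f hmon ξ hinj hsplit n hn hord u hu hnz
end

section
/- Let q be a prime power and let ξ ∈ GF(q^m) have minimal polynomial f(x) = x^m − σ_{m−1}x^{m−1} − ⋯ − σ_1 x − σ_0 of degree m over GF(q). A sequence u = (u_k)_{k≥0} in GF(q^m) is an f-sequence if and only if there exists a q-polynomial L(x) = L_0 x + L_1 x^q + ⋯ + L_{m−1} x^{q^{m−1}} with coefficients in GF(q^m) such that u_k = L(ξ^k) for all k ≥ 0. -/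
open Polynomial

/-!
The Frobenius powers `ξ ^ q ^ i` are roots of the minimal polynomial `f` of `ξ`, so every
sequence `k ↦ L(ξ ^ k)` is an `f`-sequence. Conversely `f`-sequences are determined by their
first `m` terms, so it suffices that `c ↦ (L_c(ξ ^ j))_{j < m}` is onto, i.e. that the Moore
matrix of `1, ξ, …, ξ ^ (m - 1)` is invertible. If `L_c` vanishes on these powers then, being
`GF(q)`-linear, it vanishes on their span, a set of `q ^ m` elements; but `L_c` has degree
`< q ^ m`, so `c = 0`.
-/

section LinearRecurrence

variable {F E : Type*} [Field F] [Field E] [Algebra F E] {f : F[X]}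

theorem IsLRS.ext {u v : ℕ → E} (hu : IsLRS f u) (hv : IsLRS f v)
    (h : ∀ j < f.natDegree, u j = v j) : u = v := by
  funext k
  induction k using Nat.strong_induction_on with
  | _ k ih =>
    rcases lt_or_ge k f.natDegree with hk | hk
    · exact h k hk
    · obtain ⟨t, rfl⟩ := Nat.exists_eq_add_of_le' hk
      rw [hu, hv]
      exact Finset.sum_congr rfl fun j hj => by
        rw [ih (t + j) (by simp only [Finset.mem_range] at hj; omega)]

theorem isLRS_sum_mul {ι : Type*} (s : Finset ι) (c : ι → E) {v : ι → ℕ → E}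
    (hv : ∀ i ∈ s, IsLRS f (v i)) : IsLRS f fun k => ∑ i ∈ s, c i * v i k := by
  intro k
  simp only [Finset.mul_sum]
  rw [Finset.sum_comm]
  refine Finset.sum_congr rfl fun i hi => ?_
  rw [hv i hi, Finset.mul_sum]
  exact Finset.sum_congr rfl fun j _ => mul_left_comm _ _ _

theorem isLRS_pow_of_aeval_eq_zero (hf : f.Monic) {ζ : E} (hζ : aeval ζ f = 0) :
    IsLRS f fun k => ζ ^ k := by
  have hroot : ζ ^ f.natDegree =
      ∑ i ∈ Finset.range f.natDegree, algebraMap F E (-(f.coeff i)) * ζ ^ i := by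
    rw [aeval_eq_sum_range, Finset.sum_range_succ, hf.coeff_natDegree, one_smul] at hζ
    simp only [map_neg, neg_mul, Finset.sum_neg_distrib, ← Algebra.smul_def]
    linear_combination hζ
  intro k
  simp only [pow_add, hroot, Finset.mul_sum]
  exact Finset.sum_congr rfl fun i _ => mul_left_comm _ _ _

end LinearRecurrence

section FiniteField

variable {F E : Type*} [Field F] [Fintype F] [Field E] [Algebra F E]

theorem frobeniusAlgHom_pow_apply (n : ℕ) (x : E) :
    (FiniteField.frobeniusAlgHom F E ^ n) x = x ^ Fintype.card F ^ n := by
  rw [AlgHom.coe_pow, FiniteField.coe_frobeniusAlgHom, pow_iterate]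

theorem isLRS_qPolyMap {ξ : E} (hξ : IsIntegral F ξ) {m : ℕ} (c : Fin m → E) :
    IsLRS (minpoly F ξ) fun k => qPolyMap (Fintype.card F) c (ξ ^ k) := by
  simp only [qPolyMap, pow_right_comm ξ _ (Fintype.card F ^ _)]
  refine isLRS_sum_mul _ c fun i _ => isLRS_pow_of_aeval_eq_zero (minpoly.monic hξ) ?_
  rw [← frobeniusAlgHom_pow_apply, aeval_algHom_apply, minpoly.aeval, map_zero]

def qPolyLinearMap {m : ℕ} (c : Fin m → E) : E →ₗ[F] E :=
  ∑ i, c i • (FiniteField.frobeniusAlgHom F E ^ (i : ℕ)).toLinearMap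

theorem qPolyLinearMap_apply {m : ℕ} (c : Fin m → E) (x : E) :
    qPolyLinearMap (F := F) c x = qPolyMap (Fintype.card F) c x := by
  simp only [qPolyLinearMap, qPolyMap, LinearMap.sum_apply, LinearMap.smul_apply,
    AlgHom.toLinearMap_apply, frobeniusAlgHom_pow_apply, smul_eq_mul]

theorem qPolyMap_eq_zero_on_span {ι : Type*} {m : ℕ} {c : Fin m → E} {v : ι → E}
    (h : ∀ j, qPolyMap (Fintype.card F) c (v j) = 0) :
    ∀ x ∈ Submodule.span F (Set.range v), qPolyMap (Fintype.card F) c x = 0 := by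
  intro x hx
  have hker : Set.range v ⊆ LinearMap.ker (qPolyLinearMap (F := F) c) :=
    Set.range_subset_iff.2 fun j => by
      rw [SetLike.mem_coe, LinearMap.mem_ker, qPolyLinearMap_apply, h]
  rw [← qPolyLinearMap_apply, ← LinearMap.mem_ker]
  exact Submodule.span_le.2 hker hx

theorem eq_zero_of_qPolyMap_eq_zero_on (V : Submodule F E) [FiniteDimensional F V] {m : ℕ}
    (hm : m ≤ Module.finrank F V) (c : Fin m → E)
    (h : ∀ x ∈ V, qPolyMap (Fintype.card F) c x = 0) : c = 0 := by
  classical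
  set q := Fintype.card F
  have hq : 1 < q := Fintype.one_lt_card
  have : Fintype V := @Fintype.ofFinite V (Module.finite_of_finite F)
  let P : E[X] := ∑ i : Fin m, monomial (q ^ (i : ℕ)) (c i)
  have hcoeff (i : Fin m) : P.coeff (q ^ (i : ℕ)) = c i := by
    simp only [P, finsetSum_coeff, coeff_monomial, (Nat.pow_right_injective hq).eq_iff,
      Fin.val_inj, Finset.sum_ite_eq', Finset.mem_univ, if_true]
  have hdeg : P.natDegree < Fintype.card V :=
    calc P.natDegree ≤ q ^ m - 1 := natDegree_sum_le_of_forall_le _ _ fun i _ =>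
          (natDegree_monomial_le _).trans (Nat.le_sub_one_of_lt (Nat.pow_lt_pow_right hq i.2))
      _ < q ^ m := Nat.sub_one_lt (pow_ne_zero _ (by omega))
      _ ≤ q ^ Module.finrank F V := Nat.pow_le_pow_right (by omega) hm
      _ = Fintype.card V := Module.card_eq_pow_finrank.symm
  have hP : P = 0 := eq_zero_of_natDegree_lt_card_of_eval_eq_zero P Subtype.val_injective
    (fun x : V => by simpa [P, eval_finsetSum, qPolyMap] using h x x.2) hdeg
  funext i
  rw [← hcoeff, hP, coeff_zero, Pi.zero_apply]

def mooreMatrix (q : ℕ) {m : ℕ} (v : Fin m → E) : Matrix (Fin m) (Fin m) E :=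
  Matrix.of fun i j => v j ^ q ^ (i : ℕ)

theorem vecMul_mooreMatrix (q : ℕ) {m : ℕ} (v c : Fin m → E) :
    Matrix.vecMul c (mooreMatrix q v) = fun j => qPolyMap q c (v j) :=
  rfl

theorem isUnit_mooreMatrix {m : ℕ} {v : Fin m → E} (hv : LinearIndependent F v) :
    IsUnit (mooreMatrix (Fintype.card F) v) := by
  refine Matrix.vecMul_injective_iff_isUnit.1 fun c c' hcc => sub_eq_zero.1 ?_
  have := FiniteDimensional.span_of_finite F (Set.finite_range v)
  have hv_span : m ≤ Module.finrank F (Submodule.span F (Set.range v)) := by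
    rw [finrank_span_eq_card hv, Fintype.card_fin]
  refine eq_zero_of_qPolyMap_eq_zero_on _ hv_span _ (qPolyMap_eq_zero_on_span fun j => ?_)
  dsimp only at hcc
  calc qPolyMap (Fintype.card F) (c - c') (v j)
      = Matrix.vecMul (c - c') (mooreMatrix (Fintype.card F) v) j := by rw [vecMul_mooreMatrix]
    _ = 0 := by rw [Matrix.sub_vecMul, hcc, sub_self, Pi.zero_apply]

end FiniteField

theorem isLRS_iff_qPoly_general {F E : Type*} [Field F] [Fintype F] [Field E]
    [Algebra F E] (m : ℕ) (hm : 0 < m)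
    (ξ : E) (hdeg : (minpoly F ξ).natDegree = m) (u : ℕ → E) :
    IsLRS (minpoly F ξ) u ↔
      ∃ c : Fin m → E, ∀ k : ℕ, u k = qPolyMap (Fintype.card F) c (ξ ^ k) := by
  have hξ : IsIntegral F ξ := by
    by_contra h
    rw [minpoly.eq_zero h, natDegree_zero] at hdeg
    omega
  refine ⟨fun hu => ?_, fun ⟨c, hc⟩ => (funext hc : u = _) ▸ isLRS_qPolyMap hξ c⟩
  subst hdeg
  have hM := isUnit_mooreMatrix (F := F) (linearIndependent_pow ξ)
  obtain ⟨c, hc⟩ := Matrix.vecMul_surjective_iff_isUnit.2 hM fun j => u j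
  dsimp only at hc
  refine ⟨c, congrFun (hu.ext (isLRS_qPolyMap hξ c) fun j hj => ?_)⟩
  rw [← congrFun hc ⟨j, hj⟩, vecMul_mooreMatrix]

/-- for `ξ ∈ GF(qᵐ)` with minimal polynomial `f` of degree `m` over
`GF(q)`, a sequence `u` in `GF(qᵐ)` is an `f`-sequence iff there is a `q`-polynomial
`L(x) = L₀x + L₁x^q + ⋯ + L_{m-1}x^{q^{m-1}}` over `GF(qᵐ)` with `u k = L(ξ^k)` for all `k`. -/
theorem isLRS_iff_qPoly {F E : Type*} [Field F] [Fintype F] [Field E] [Fintype E]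
    [Algebra F E] (m : ℕ) (hm : 0 < m) (hrank : Module.finrank F E = m)
    (ξ : E) (hdeg : (minpoly F ξ).natDegree = m) (u : ℕ → E) :
    IsLRS (minpoly F ξ) u ↔
      ∃ c : Fin m → E, ∀ k : ℕ, u k = qPolyMap (Fintype.card F) c (ξ ^ k) :=
  isLRS_iff_qPoly_general m hm ξ hdeg u
end

section
/- Let q be a prime power and let ξ ∈ GF(q^m)* have multiplicative order n and degree m over GF(q). The cyclic code C(n,q,{ξ}) of length n over GF(q) with defining zero ξ has a permutation automorphism group strictly larger than the group of order mn generated by the cyclic shift σ: i ↦ i−1 (mod n) and the Frobenius permutation φ: i ↦ qi (mod n) if and only if ξ is nonstandard of degree m over GF(q). -/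
open Polynomial

/-!
Write `f` for the minimal polynomial of `ξ` and `q = |F|`. The codewords of `C` are the
coefficient vectors of the multiples of `f` reduced modulo `Xⁿ - 1`, and a sequence `u` is
an `f`-sequence iff the functional `P ↦ ∑ₖ Pₖ uₖ` kills every multiple of `f`. Hence a
permutation `π` of `ℤ/n` is an automorphism of `C` iff `k ↦ ξ^{π⁻¹(k)}` is an `f`-sequence,
and every `f`-sequence of least period `n` running through `⟨ξ⟩` arises in this way.

The shift and the Frobenius generate exactly the affine maps `i ↦ qˢi + t`. After translating
so that `π⁻¹(0) = 0`, the affine ones correspond to the geometric sequences `(ζᵏ)` with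
`ζ = ξ^{qˢ}`; as the roots of `f` are exactly the conjugates `ξ^{qˢ}` and an `f`-sequence is
determined by its first `m` terms, these are the `f`-sequences starting with
`(1, ζ, …, ζ^{m-1})` for a root `ζ` of `f`.
-/

section LinearRecurrence

variable {F E : Type*} [Field F] [Field E] [Algebra F E]

noncomputable def seqFunctional (u : ℕ → E) : F[X] →ₗ[F] E :=
  Polynomial.lsum fun k => LinearMap.toSpanSingleton F E (u k)

@[simp]
lemma seqFunctional_monomial (u : ℕ → E) (k : ℕ) (a : F) :
    seqFunctional u (monomial k a) = a • u k := by
  simp [seqFunctional]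

lemma seqFunctional_apply (u : ℕ → E) (P : F[X]) :
    seqFunctional u P = ∑ i ∈ Finset.range (P.natDegree + 1), P.coeff i • u i := by
  simp [seqFunctional, Polynomial.sum_over_range]

lemma seqFunctional_X_pow_mul (u : ℕ → E) (k : ℕ) (P : F[X]) :
    seqFunctional u (X ^ k * P) = seqFunctional (fun i => u (k + i)) P := by
  induction P using Polynomial.induction_on' with
  | add p q hp hq => simp only [mul_add, map_add, hp, hq]
  | monomial i a => simp [X_pow_mul_monomial, add_comm]

lemma seqFunctional_pow (ζ : E) (P : F[X]) : seqFunctional (ζ ^ ·) P = aeval ζ P := by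
  induction P using Polynomial.induction_on' with
  | add p q hp hq => simp only [map_add, hp, hq]
  | monomial i a => simp [Algebra.smul_def]

variable {f : F[X]} {u v : ℕ → E}

theorem isLRS_iff_seqFunctional (hf : f.Monic) :
    IsLRS f u ↔ ∀ k, seqFunctional (fun i => u (k + i)) f = 0 := by
  refine forall_congr' fun k => ?_
  rw [seqFunctional_apply, Finset.sum_range_succ, hf.coeff_natDegree, one_smul,
    add_eq_zero_iff_eq_neg', ← Finset.sum_neg_distrib]
  simp only [map_neg, neg_mul, Algebra.smul_def]

theorem IsLRS.seqFunctional_eq_zero (hf : f.Monic) (hu : IsLRS f u) {P : F[X]} (hP : f ∣ P) :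
    seqFunctional u P = 0 := by
  obtain ⟨g, rfl⟩ := hP
  induction g using Polynomial.induction_on' with
  | add p q hp hq => rw [mul_add, map_add, hp, hq, add_zero]
  | monomial k b =>
    rw [← C_mul_X_pow_eq_monomial, mul_left_comm, ← smul_eq_C_mul, map_smul, mul_comm f,
      seqFunctional_X_pow_mul, (isLRS_iff_seqFunctional hf).1 hu k, smul_zero]

theorem isLRS_pow (hf : f.Monic) {ζ : E} (hζ : aeval ζ f = 0) : IsLRS f (ζ ^ ·) := by
  refine (isLRS_iff_seqFunctional hf).2 fun k => ?_
  rw [← seqFunctional_X_pow_mul, seqFunctional_pow, map_mul, hζ, mul_zero]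

theorem IsLRS.const_mul (hu : IsLRS f u) (c : E) : IsLRS f (fun k => c * u k) := by
  intro k
  simp only [hu k, Finset.mul_sum, mul_left_comm c]

theorem IsLRS.eq_of_forall_lt (hu : IsLRS f u) (hv : IsLRS f v)
    (h : ∀ i < f.natDegree, u i = v i) : u = v := by
  funext k
  induction k using Nat.strong_induction_on with
  | _ k ih =>
    obtain hk | hk := lt_or_ge k f.natDegree
    · exact h k hk
    · obtain ⟨j, rfl⟩ := Nat.exists_eq_add_of_le' hk
      rw [hu, hv]
      exact Finset.sum_congr rfl fun i hi => by
        rw [ih _ (by have := Finset.mem_range.1 hi; omega)]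

end LinearRecurrence

section CyclicExponent

variable {M : Type*} [Monoid M] {ξ : M} {n : ℕ} [NeZero n]

theorem pow_eq_pow_iff_natCast_eq (hn : orderOf ξ = n) {a b : ℕ} :
    ξ ^ a = ξ ^ b ↔ (a : ZMod n) = b := by
  have hξ : IsOfFinOrder ξ := orderOf_pos_iff.1 (hn ▸ NeZero.pos n)
  rw [hξ.pow_eq_pow_iff_modEq, hn, ZMod.natCast_eq_natCast_iff]

theorem pow_val_natCast (hn : orderOf ξ = n) (k : ℕ) : ξ ^ (k : ZMod n).val = ξ ^ k := by
  rw [pow_eq_pow_iff_natCast_eq hn, ZMod.natCast_val, ZMod.cast_id]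

theorem pow_val_injective (hn : orderOf ξ = n) : Function.Injective fun j : ZMod n => ξ ^ j.val :=
  fun i j h => by simpa using (pow_eq_pow_iff_natCast_eq hn).1 h

theorem pow_val_add (hn : orderOf ξ = n) (i j : ZMod n) :
    ξ ^ (i + j).val = ξ ^ i.val * ξ ^ j.val := by
  rw [← pow_add, pow_eq_pow_iff_natCast_eq hn]
  simp

variable (τ : Equiv.Perm (ZMod n))

theorem isLeast_period_pow_val_perm (hn : orderOf ξ = n) :
    IsLeast {p : ℕ | 0 < p ∧ ∀ k : ℕ, ξ ^ (τ ↑(k + p)).val = ξ ^ (τ k).val} n := by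
  refine ⟨⟨NeZero.pos n, fun k => by simp⟩, fun p ⟨hp, hper⟩ => ?_⟩
  have h := pow_val_injective hn (hper 0)
  rw [zero_add, τ.injective.eq_iff, Nat.cast_zero, ZMod.natCast_eq_zero_iff] at h
  exact Nat.le_of_dvd hp h

theorem range_pow_val_perm (hn : orderOf ξ = n) :
    Set.range (fun k : ℕ => ξ ^ (τ k).val) = powersOf ξ := by
  refine Set.Subset.antisymm (Set.range_subset_iff.2 fun k => ⟨_, rfl⟩) ?_
  rintro _ ⟨k, rfl⟩
  refine ⟨(τ.symm k).val, ?_⟩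
  simp only [ZMod.natCast_val, ZMod.cast_id', id, Equiv.apply_symm_apply, pow_val_natCast hn]

theorem exists_perm_pow_val_eq (hn : orderOf ξ = n) {u : ℕ → M} (hper : Function.Periodic u n)
    (hrange : Set.range u = powersOf ξ) :
    ∃ τ : Equiv.Perm (ZMod n), ∀ k : ℕ, ξ ^ (τ k).val = u k := by
  have hu : ∀ k : ℕ, u (k : ZMod n).val = u k := fun k => by
    rw [ZMod.val_natCast, hper.map_mod_nat]
  have hex : ∀ j : ZMod n, ∃ i : ZMod n, ξ ^ i.val = u j.val := fun j => by
    obtain ⟨k, hk⟩ : u j.val ∈ powersOf ξ := hrange ▸ ⟨_, rfl⟩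
    exact ⟨k, by rw [hk, pow_val_natCast hn]⟩
  choose τ hτ using hex
  have hsurj : Function.Surjective τ := fun i => by
    obtain ⟨k, hk⟩ : ξ ^ i.val ∈ Set.range u := hrange ▸ ⟨_, rfl⟩
    exact ⟨k, pow_val_injective hn (show ξ ^ (τ k).val = ξ ^ i.val by rw [hτ, hu, hk])⟩
  exact ⟨.ofBijective τ (Finite.surjective_iff_bijective.1 hsurj),
    fun k => (hτ k).trans (hu k)⟩

theorem pow_val_perm_eq_pow_iff (hn : orderOf ξ = n) (a : ℕ) :
    (fun k : ℕ => ξ ^ (τ k).val) = (fun k => (ξ ^ a) ^ k) ↔ ∀ i, τ i = a * i := by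
  simp only [funext_iff, ← pow_mul, ← pow_val_natCast hn (a * _)]
  refine ⟨fun h i => ?_, fun h k => by rw [h]; push_cast; rfl⟩
  simpa using pow_val_injective hn (h i.val)

end CyclicExponent

section CyclicCode

variable {F E : Type*} [Field F] [Field E] [Algebra F E] {n : ℕ}

/-- The coefficient vector of `P mod (Xⁿ - 1)`. -/
noncomputable def cyclicCoeffs (n : ℕ) : F[X] →ₗ[F] (ZMod n → F) :=
  Polynomial.lsum fun k => LinearMap.single F (fun _ => F) (k : ZMod n)

@[simp]
lemma cyclicCoeffs_monomial (k : ℕ) (a : F) :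
    cyclicCoeffs n (monomial k a) = Pi.single (k : ZMod n) a := by
  simp [cyclicCoeffs]

variable [NeZero n]

lemma cyclicCoeffs_surjective : Function.Surjective (cyclicCoeffs (F := F) n) := fun c =>
  ⟨∑ j, monomial j.val (c j), by simp [Finset.univ_sum_single]⟩

lemma linearCombination_cyclicCoeffs (w : ZMod n → E) (P : F[X]) :
    Fintype.linearCombination F w (cyclicCoeffs n P) = seqFunctional (fun k => w k) P := by
  induction P using Polynomial.induction_on' with
  | add p q hp hq => simp only [map_add, hp, hq]
  | monomial k a => simp [Fintype.linearCombination_apply_single]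

variable {ξ : E}

theorem ker_le_ker_linearCombination_iff_isLRS (hξ : IsIntegral F ξ) (hn : orderOf ξ = n)
    (w : ZMod n → E) :
    LinearMap.ker (Fintype.linearCombination F fun j : ZMod n => ξ ^ j.val) ≤
        LinearMap.ker (Fintype.linearCombination F w) ↔
      IsLRS (minpoly F ξ) (fun k => w k) := by
  have hχ (P : F[X]) :
      Fintype.linearCombination F (fun j : ZMod n => ξ ^ j.val) (cyclicCoeffs n P) =
        aeval ξ P := by
    simp only [linearCombination_cyclicCoeffs, pow_val_natCast hn, seqFunctional_pow]
  refine ⟨fun h => (isLRS_iff_seqFunctional (minpoly.monic hξ)).2 fun k => ?_,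
    fun hw c hc => ?_⟩
  · rw [← seqFunctional_X_pow_mul (fun j => w j), ← linearCombination_cyclicCoeffs,
      ← LinearMap.mem_ker]
    apply h
    rw [LinearMap.mem_ker, hχ, map_mul, minpoly.aeval, mul_zero]
  · obtain ⟨P, rfl⟩ := cyclicCoeffs_surjective c
    rw [LinearMap.mem_ker, hχ] at hc
    rw [LinearMap.mem_ker, linearCombination_cyclicCoeffs]
    exact hw.seqFunctional_eq_zero (minpoly.monic hξ) (minpoly.dvd F ξ hc)

theorem perm_preserves_code_iff_isLRS (hξ : IsIntegral F ξ) (hn : orderOf ξ = n)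
    (π : Equiv.Perm (ZMod n)) :
    (∀ c : ZMod n → F, ∑ i, algebraMap F E (c i) * ξ ^ i.val = 0 →
        ∑ i, algebraMap F E (c (π i)) * ξ ^ i.val = 0) ↔
      IsLRS (minpoly F ξ) (fun k => ξ ^ (π.symm k).val) := by
  rw [← ker_le_ker_linearCombination_iff_isLRS hξ hn fun j => ξ ^ (π.symm j).val]
  refine forall_congr' fun c => ?_
  simp only [LinearMap.mem_ker, Fintype.linearCombination_apply, Algebra.smul_def]
  rw [← Equiv.sum_comp π fun i => algebraMap F E (c i) * ξ ^ (π.symm i).val]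
  simp only [Equiv.symm_apply_apply]

end CyclicCode

section FrobeniusConjugates

variable {F E : Type*} [Field F] [Fintype F] [Field E] [Algebra F E]

theorem aeval_pow_card_pow_minpoly (ξ : E) (s : ℕ) :
    aeval (ξ ^ Fintype.card F ^ s) (minpoly F ξ) = 0 := by
  have hφ : (FiniteField.frobeniusAlgHom F E ^ s) ξ = ξ ^ Fintype.card F ^ s := by
    rw [AlgHom.coe_pow, FiniteField.coe_frobeniusAlgHom, pow_iterate]
  rw [← hφ, aeval_algHom_apply, minpoly.aeval, map_zero]

theorem exists_eq_pow_card_pow_of_aeval_minpoly [Finite E] {ξ ζ : E}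
    (hζ : aeval ζ (minpoly F ξ) = 0) : ∃ s : ℕ, ζ = ξ ^ Fintype.card F ^ s := by
  have hξ : IsIntegral F ξ := .of_finite F ξ
  have hmin : minpoly F ζ = minpoly F ξ :=
    (minpoly.eq_of_irreducible_of_monic (minpoly.irreducible hξ) hζ (minpoly.monic hξ)).symm
  obtain ⟨σ, rfl⟩ := (Normal.minpoly_eq_iff_mem_orbit (F := F) (E := E)).1 hmin
  obtain ⟨s, hs⟩ := (FiniteField.bijective_frobeniusAlgEquivOfAlgebraic_pow F E).2 σ
  refine ⟨s, ?_⟩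
  rw [← hs]
  change (FiniteField.frobeniusAlgEquivOfAlgebraic F E ^ (s : ℕ)) ξ = _
  rw [AlgEquiv.coe_pow, FiniteField.coe_frobeniusAlgEquivOfAlgebraic_iterate]

theorem isOfFinOrder_natCast_card [Finite E] {n : ℕ} [NeZero n] {ξ : E} (hn : orderOf ξ = n) :
    IsOfFinOrder (Fintype.card F : ZMod n) := by
  have := Fintype.ofFinite E
  refine isOfFinOrder_iff_pow_eq_one.2 ⟨Module.finrank F E, Module.finrank_pos, ?_⟩
  have h := FiniteField.pow_card ξ
  rw [Module.card_eq_pow_finrank (K := F), ← pow_one ξ, ← pow_mul, one_mul,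
    pow_eq_pow_iff_natCast_eq hn] at h
  exact_mod_cast h

end FrobeniusConjugates

section AffineGroup

variable {n : ℕ} {a : ZMod n}

theorem exists_affine_of_mem_closure_shift_mul (ha : IsOfFinOrder a) {π : Equiv.Perm (ZMod n)}
    (hπ : π ∈ Subgroup.closure
      {π' : Equiv.Perm (ZMod n) | (∀ i, π' i = i - 1) ∨ (∀ i, π' i = a * i)}) :
    ∃ (s : ℕ) (t : ZMod n), ∀ i, π i = a ^ s * i + t := by
  induction hπ using Subgroup.closure_induction with
  | mem π' h =>
    rcases h with h | h
    · exact ⟨0, -1, fun i => by rw [h, pow_zero, one_mul, sub_eq_add_neg]⟩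
    · exact ⟨1, 0, fun i => by rw [h, pow_one, add_zero]⟩
  | one => exact ⟨0, 0, fun i => by simp⟩
  | mul π₁ π₂ _ _ h₁ h₂ =>
    obtain ⟨⟨s₁, t₁, h₁⟩, ⟨s₂, t₂, h₂⟩⟩ := And.intro h₁ h₂
    exact ⟨s₁ + s₂, a ^ s₁ * t₂ + t₁, fun i => by
      rw [Equiv.Perm.mul_apply, h₂, h₁, pow_add]; ring⟩
  | inv π' _ h =>
    obtain ⟨s, t, h⟩ := h
    obtain ⟨k, hk, hak⟩ := ha.exists_pow_eq_one
    have hinv : a ^ s * a ^ (s * (k - 1)) = 1 := by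
      rw [← pow_add, add_comm, ← mul_add_one, Nat.sub_one_add_one hk.ne', pow_mul', hak,
        one_pow]
    refine ⟨s * (k - 1), -(a ^ (s * (k - 1)) * t), fun i => ?_⟩
    rw [Equiv.Perm.inv_eq_iff_eq, h]
    linear_combination (t - i) * hinv

theorem mem_closure_shift_mul_of_affine [NeZero n] (ha : IsOfFinOrder a)
    {π : Equiv.Perm (ZMod n)} {s : ℕ} {t : ZMod n} (h : ∀ i, π i = a ^ s * i + t) :
    π ∈ Subgroup.closure
      {π' : Equiv.Perm (ZMod n) | (∀ i, π' i = i - 1) ∨ (∀ i, π' i = a * i)} := by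
  have hshift (k : ℕ) (i : ZMod n) : (Equiv.subRight (1 : ZMod n) ^ k) i = i - k := by
    induction k generalizing i with
    | zero => simp
    | succ k ih =>
      rw [pow_succ', Equiv.Perm.mul_apply, ih, Equiv.subRight_apply]
      push_cast
      ring
  have hmul (k : ℕ) (i : ZMod n) : (MulAction.toPerm ha.unit ^ k) i = a ^ k * i := by
    induction k generalizing i with
    | zero => simp
    | succ k ih =>
      rw [pow_succ', Equiv.Perm.mul_apply, ih, MulAction.toPerm_apply, Units.smul_def,
        IsOfFinOrder.val_unit, smul_eq_mul, pow_succ', mul_assoc]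
  have hπ : π = Equiv.subRight 1 ^ (-t).val * MulAction.toPerm ha.unit ^ s := by
    ext i
    rw [Equiv.Perm.mul_apply, hshift, hmul, h, ZMod.natCast_val, ZMod.cast_id', id, sub_neg_eq_add]
  rw [hπ]
  refine mul_mem (pow_mem (Subgroup.subset_closure ?_) _) (pow_mem (Subgroup.subset_closure ?_) _)
  exacts [Or.inl fun i => rfl, Or.inr fun i => rfl]

theorem mem_closure_shift_mul_iff [NeZero n] (ha : IsOfFinOrder a) (π : Equiv.Perm (ZMod n)) :
    π ∈ Subgroup.closure
        {π' : Equiv.Perm (ZMod n) | (∀ i, π' i = i - 1) ∨ (∀ i, π' i = a * i)} ↔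
      ∃ (s : ℕ) (t : ZMod n), ∀ i, π i = a ^ s * i + t :=
  ⟨exists_affine_of_mem_closure_shift_mul ha,
    fun ⟨_, _, h⟩ => mem_closure_shift_mul_of_affine ha h⟩

end AffineGroup

section Nonstandard

variable {F E : Type*} [Field F] [Fintype F] [Field E] [Algebra F E] {m n : ℕ} [NeZero n]
  {ξ : E}

theorem isNonstandard_of_isLRS_of_not_affine [Finite E] (hdeg : (minpoly F ξ).natDegree = m)
    (hn : orderOf ξ = n) {ρ : Equiv.Perm (ZMod n)}
    (hρ : IsLRS (minpoly F ξ) fun k => ξ ^ (ρ k).val)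
    (haff : ¬∃ (s : ℕ) (t : ZMod n), ∀ i, ρ i = (Fintype.card F : ZMod n) ^ s * i + t) :
    IsNonstandard F m ξ := by
  -- translating by `-ρ 0` normalises the sequence to start with `1`
  set τ := ρ.trans (Equiv.subRight (ρ 0))
  have hτ : IsLRS (minpoly F ξ) fun k => ξ ^ (τ k).val := by
    convert hρ.const_mul (ξ ^ (-ρ 0).val) using 3 with k
    rw [← pow_val_add hn, neg_add_eq_sub]
    rfl
  refine ⟨hdeg, _, hτ, hn ▸ isLeast_period_pow_val_perm τ hn, range_pow_val_perm τ hn,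
    by simp [τ], fun ζ hζ => ?_⟩
  by_contra! hstd
  obtain ⟨s, rfl⟩ := exists_eq_pow_card_pow_of_aeval_minpoly hζ
  have hgeo := hτ.eq_of_forall_lt (isLRS_pow (minpoly.monic (.of_finite F ξ)) hζ)
    fun i hi => hstd ⟨i, hdeg ▸ hi⟩
  rw [pow_val_perm_eq_pow_iff τ hn] at hgeo
  exact haff ⟨s, ρ 0, fun i => by simpa [τ, sub_eq_iff_eq_add] using hgeo i⟩

theorem exists_perm_isLRS_not_affine_of_isNonstandard (hn : orderOf ξ = n)
    (h : IsNonstandard F m ξ) :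
    ∃ ρ : Equiv.Perm (ZMod n), (IsLRS (minpoly F ξ) fun k => ξ ^ (ρ k).val) ∧
      ¬∃ (s : ℕ) (t : ZMod n), ∀ i, ρ i = (Fintype.card F : ZMod n) ^ s * i + t := by
  obtain ⟨-, u, hu, hper, hrange, hu0, hne⟩ := h
  obtain ⟨ρ, hρ⟩ := exists_perm_pow_val_eq hn (hn ▸ hper.1.2) hrange
  obtain rfl : (fun k : ℕ => ξ ^ (ρ k).val) = u := funext hρ
  refine ⟨ρ, hu, fun ⟨s, t, hst⟩ => ?_⟩
  have ht : t = 0 := pow_val_injective hn (by simpa [hst] using hu0)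
  have hgeo := (pow_val_perm_eq_pow_iff ρ hn (Fintype.card F ^ s)).2 (by simpa [ht] using hst)
  obtain ⟨i, hi⟩ := hne _ (aeval_pow_card_pow_minpoly ξ s)
  exact hi (congrFun hgeo i)

end Nonstandard

theorem extraAut_iff_isNonstandard_general {F E : Type*} [Field F] [Fintype F] [Field E] [Fintype E]
    [Algebra F E] (m n : ℕ) [NeZero n]
    (ξ : E) (hdeg : (minpoly F ξ).natDegree = m) (hn : orderOf ξ = n) :
    (∃ π : Equiv.Perm (ZMod n),
        (∀ c : ZMod n → F, (∑ i : ZMod n, algebraMap F E (c i) * ξ ^ i.val) = 0 →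
          (∑ i : ZMod n, algebraMap F E (c (π i)) * ξ ^ i.val) = 0) ∧
        π ∉ Subgroup.closure {π' : Equiv.Perm (ZMod n) |
          (∀ i, π' i = i - 1) ∨ (∀ i, π' i = (Fintype.card F : ZMod n) * i)}) ↔
      IsNonstandard F m ξ := by
  have hq := isOfFinOrder_natCast_card (F := F) hn
  have hξ : IsIntegral F ξ := .of_finite F ξ
  constructor
  · rintro ⟨π, hπ, hcl⟩
    refine isNonstandard_of_isLRS_of_not_affine hdeg hn
      ((perm_preserves_code_iff_isLRS hξ hn π).1 hπ) fun haff => hcl ?_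
    rw [← Subgroup.inv_mem_iff, Equiv.Perm.inv_def]
    exact (mem_closure_shift_mul_iff hq _).2 haff
  · intro h
    obtain ⟨ρ, hρ, haff⟩ := exists_perm_isLRS_not_affine_of_isNonstandard hn h
    refine ⟨ρ.symm, (perm_preserves_code_iff_isLRS hξ hn _).2 (by simpa using hρ),
      fun hcl => haff ?_⟩
    rw [← Subgroup.inv_mem_iff, Equiv.Perm.inv_def, Equiv.symm_symm] at hcl
    exact (mem_closure_shift_mul_iff hq _).1 hcl

/-- for `ξ ∈ GF(qᵐ)*` of order `n` and degree `m` over `GF(q)`, the cyclic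
code `C(n, q, {ξ})` has a permutation automorphism outside the group generated by the
cyclic shift `i ↦ i - 1` and the Frobenius permutation `i ↦ q·i` (a group of order `mn`)
iff `ξ` is nonstandard of degree `m` over `GF(q)`. -/
theorem extraAut_iff_isNonstandard {F E : Type*} [Field F] [Fintype F] [Field E] [Fintype E]
    [Algebra F E] (m n : ℕ) [NeZero n] (hm : 0 < m) (hrank : Module.finrank F E = m)
    (ξ : E) (hξ : ξ ≠ 0) (hdeg : (minpoly F ξ).natDegree = m) (hn : orderOf ξ = n) :
    (∃ π : Equiv.Perm (ZMod n),
        (∀ c : ZMod n → F, (∑ i : ZMod n, algebraMap F E (c i) * ξ ^ i.val) = 0 →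
          (∑ i : ZMod n, algebraMap F E (c (π i)) * ξ ^ i.val) = 0) ∧
        π ∉ Subgroup.closure {π' : Equiv.Perm (ZMod n) |
          (∀ i, π' i = i - 1) ∨ (∀ i, π' i = (Fintype.card F : ZMod n) * i)}) ↔
      IsNonstandard F m ξ :=
  extraAut_iff_isNonstandard_general m n ξ hdeg hn
end

section
/- Let q_0 be a prime power, let q = q_0^t, and let m be a positive integer with gcd(m, t) = 1. If ξ is nonstandard of degree m over GF(q_0), then ξ is also nonstandard of degree m over GF(q), with the same multiplicative order, and the q-order of ξ equals its q_0-order. -/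
open Polynomial

/-! Let `f` be the minimal polynomial of `ξ` over `F0` and `t = [F : F0]`. The degree `m` of `f`
divides `[F(ξ) : F0] = t · [F(ξ) : F]`, so `gcd(m, t) = 1` forces `[F(ξ) : F] = m`: `f` stays
irreducible over `F`, and the `f`-sequence witnessing nonstandardness over `F0` works verbatim
over `F`. Similarly, an element of `F0(ξ) ∩ F` has degree over `F0` dividing both `m` and `t`,
so it lies in `F0`; hence `ξ ^ d ∈ F ↔ ξ ^ d ∈ F0`, and the two `q`-orders agree. -/

open IntermediateField Module

section Tower

variable {F0 F E : Type*} [Field F0] [Field F] [Field E] [Algebra F0 F] [Algebra F0 E]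
  [Algebra F E] [IsScalarTower F0 F E]

theorem natDegree_minpoly_dvd_finrank_of_mem (K : IntermediateField F0 E) {x : E} (hxK : x ∈ K)
    (hx : IsIntegral F0 x) : (minpoly F0 x).natDegree ∣ finrank F0 K := by
  rw [show minpoly F0 x = minpoly F0 (⟨x, hxK⟩ : K) from
    minpoly.algHom_eq K.val Subtype.val_injective ⟨x, hxK⟩]
  exact minpoly.degree_dvd (isIntegral_iff.mpr hx)

theorem mem_range_algebraMap_of_coprime_finrank [FiniteDimensional F0 F]
    (K : IntermediateField F0 E) (hcop : (finrank F0 K).Coprime (finrank F0 F)) {x : E}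
    (hxK : x ∈ K) (hxF : x ∈ Set.range (algebraMap F E)) : x ∈ Set.range (algebraMap F0 E) := by
  obtain ⟨y, rfl⟩ := hxF
  have hy : IsIntegral F0 y := .of_finite F0 y
  have hdvdF : (minpoly F0 (algebraMap F E y)).natDegree ∣ finrank F0 F := by
    rw [minpoly.algebraMap_eq (algebraMap F E).injective]
    exact minpoly.degree_dvd hy
  exact minpoly.natDegree_eq_one_iff.mp <| Nat.eq_one_of_dvd_one <|
    hcop ▸ Nat.dvd_gcd (natDegree_minpoly_dvd_finrank_of_mem K hxK hy.algebraMap) hdvdF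

theorem minpoly_map_eq_of_coprime_finrank [FiniteDimensional F0 F] {ξ : E}
    (hξ : IsIntegral F0 ξ) (hcop : (minpoly F0 ξ).natDegree.Coprime (finrank F0 F)) :
    (minpoly F0 ξ).map (algebraMap F0 F) = minpoly F ξ := by
  have hξF : IsIntegral F ξ := hξ.tower_top
  have hdvd : minpoly F ξ ∣ (minpoly F0 ξ).map (algebraMap F0 F) :=
    minpoly.dvd F ξ (by rw [aeval_map_algebraMap, minpoly.aeval])
  have hdvdL : (minpoly F0 ξ).natDegree ∣ finrank F0 F * (minpoly F ξ).natDegree := by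
    rw [← adjoin.finrank hξF, finrank_mul_finrank F0 F F⟮ξ⟯]
    exact natDegree_minpoly_dvd_finrank_of_mem (F⟮ξ⟯.restrictScalars F0)
      (mem_adjoin_simple_self F ξ) hξ
  have hle : (minpoly F0 ξ).natDegree ≤ (minpoly F ξ).natDegree :=
    Nat.le_of_dvd (minpoly.natDegree_pos hξF) (hcop.dvd_of_dvd_mul_left hdvdL)
  refine eq_of_monic_of_dvd_of_natDegree_le (minpoly.monic hξF) ((minpoly.monic hξ).map _) hdvd ?_
  rwa [natDegree_map]

theorem IsLRS.map_algebraMap {f : F0[X]} {u : ℕ → E} (hu : IsLRS f u) :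
    IsLRS (f.map (algebraMap F0 F)) u := by
  intro k
  simp only [natDegree_map, coeff_map, ← map_neg, ← IsScalarTower.algebraMap_apply]
  exact hu k

theorem IsNonstandard.of_minpoly_map_eq {m : ℕ} {ξ : E} (hξ : IsNonstandard F0 m ξ)
    (hmap : (minpoly F0 ξ).map (algebraMap F0 F) = minpoly F ξ) : IsNonstandard F m ξ := by
  obtain ⟨hdeg, u, hLRS, hperiod, hrange, hu0, hzeros⟩ := hξ
  refine ⟨by rw [← hmap, natDegree_map, hdeg], u, hmap ▸ hLRS.map_algebraMap, hperiod, hrange,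
    hu0, fun ζ hζ => hzeros ζ ?_⟩
  rwa [← hmap, aeval_map_algebraMap] at hζ

theorem range_algebraMap_subset_range_algebraMap :
    Set.range (algebraMap F0 E) ⊆ Set.range (algebraMap F E) := by
  rw [IsScalarTower.algebraMap_eq F0 F E, RingHom.coe_comp]
  exact Set.range_comp_subset_range _ _

end Tower

theorem qOrder_eq_of_forall_pow_mem_range_iff {F0 F E : Type*} [Field F0] [Field F] [Field E]
    [Algebra F0 E] [Algebra F E] {ξ : E}
    (h : ∀ d, ξ ^ d ∈ Set.range (algebraMap F E) ↔ ξ ^ d ∈ Set.range (algebraMap F0 E)) :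
    qOrder F ξ = qOrder F0 ξ := by
  simp only [qOrder, h]

theorem finrank_eq_of_card_eq_pow {F0 F : Type*} [Field F0] [Fintype F0] [Field F] [Fintype F]
    [Algebra F0 F] {t : ℕ} (hq : Fintype.card F = Fintype.card F0 ^ t) : finrank F0 F = t :=
  Nat.pow_right_injective Fintype.one_lt_card (card_eq_pow_finrank.symm.trans hq)

theorem lifting_theorem_general {F0 F E : Type*} [Field F0] [Fintype F0] [Field F] [Fintype F]
    [Field E] [Algebra F0 F] [Algebra F0 E] [Algebra F E] [IsScalarTower F0 F E]
    (m t : ℕ) (hm : 0 < m) (hcop : Nat.gcd m t = 1)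
    (hq : Fintype.card F = Fintype.card F0 ^ t)
    (ξ : E) (hξ : IsNonstandard F0 m ξ) :
    IsNonstandard F m ξ ∧ qOrder F ξ = qOrder F0 ξ := by
  have hint : IsIntegral F0 ξ := minpoly.ne_zero_iff.mp fun h => by
    simp [← hξ.1, h] at hm
  have hcoprime : (minpoly F0 ξ).natDegree.Coprime (finrank F0 F) := by
    rwa [hξ.1, finrank_eq_of_card_eq_pow hq]
  refine ⟨hξ.of_minpoly_map_eq (minpoly_map_eq_of_coprime_finrank hint hcoprime),
    qOrder_eq_of_forall_pow_mem_range_iff fun d => ⟨fun hF => ?_, fun hF0 =>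
      range_algebraMap_subset_range_algebraMap hF0⟩⟩
  exact mem_range_algebraMap_of_coprime_finrank F0⟮ξ⟯ (by rwa [adjoin.finrank hint])
    (pow_mem (mem_adjoin_simple_self F0 ξ) d) hF

/-- lifting theorem: let `q₀` be a prime power, `q = q₀ᵗ` with
`gcd(m, t) = 1`. If `ξ` is nonstandard of degree `m` over `GF(q₀)`, then `ξ` is also
nonstandard of degree `m` over `GF(q)` (the multiplicative order being that of the same
element `ξ`), and the `q`-order of `ξ` equals its `q₀`-order. -/
theorem lifting_theorem {F0 F E : Type*} [Field F0] [Fintype F0] [Field F] [Fintype F]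
    [Field E] [Fintype E] [Algebra F0 F] [Algebra F0 E] [Algebra F E] [IsScalarTower F0 F E]
    (m t : ℕ) (hm : 0 < m) (ht : 0 < t) (hcop : Nat.gcd m t = 1)
    (hq : Fintype.card F = Fintype.card F0 ^ t)
    (ξ : E) (hξ : IsNonstandard F0 m ξ) :
    IsNonstandard F m ξ ∧ qOrder F ξ = qOrder F0 ξ :=
  lifting_theorem_general m t hm hcop hq ξ hξ
end

section
/- Let q be a prime power. There is no element ξ that is nonstandard of degree 2 over GF(q) with q-order ord_q(ξ) = 3. -/
open Polynomial

/-!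
Let `q = |F|` and `ω = ξ ^ (q - 1)`. Since `ξ` has `q`-order `3`, `ω` is a primitive cube root
of unity and the Frobenius `σ : x ↦ x ^ q` acts by `σ ξ = ω ξ`, so the zeros of `f = minpoly F ξ`
are `ξ` and `ω ξ` and every `f`-sequence satisfies `u₂ = (ξ + ω ξ) u₁ - ξ · ω ξ · u₀`. Each
element of `⟨ξ⟩` is scaled by `σ` by a cube root of unity, and applying `σ` to this relation
(whose coefficients lie in `F`) with `u₀ = 1` leaves only `σ u₁ = u₁` once `u₁ ∉ {ξ, ω ξ}`.
Then `u₀, u₁ ∈ F`, so the whole sequence lies in `F`, while `ξ ∉ F` is one of its terms.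
-/

theorem pow_card_eq_self_iff_mem_range {F E : Type*} [Field F] [Fintype F] [Field E]
    [Algebra F E] {x : E} :
    x ^ Fintype.card F = x ↔ x ∈ Set.range (algebraMap F E) := by
  refine ⟨fun hx => ?_, ?_⟩
  · have hsplits : (X ^ Fintype.card F - X : F[X]).Splits := by
      rw [splits_iff_card_roots, FiniteField.roots_X_pow_card_sub_X,
        FiniteField.X_pow_card_sub_X_natDegree_eq F Fintype.one_lt_card]
      rfl
    exact hsplits.mem_range_of_isRoot
      (FiniteField.X_pow_card_sub_X_ne_zero F Fintype.one_lt_card) (by simp [hx])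
  · rintro ⟨c, rfl⟩
    rw [← map_pow, FiniteField.pow_card]

section QOrder

variable {F E : Type*} [Field F] [Field E] [Algebra F E] {ξ : E}

theorem pow_qOrder_mem_range (h : qOrder F ξ ≠ 0) :
    ξ ^ qOrder F ξ ∈ Set.range (algebraMap F E) :=
  (Nat.sInf_mem (Nat.nonempty_of_pos_sInf (Nat.pos_of_ne_zero h))).2

theorem notMem_range_of_one_lt_qOrder (h : 1 < qOrder F ξ) :
    ξ ∉ Set.range (algebraMap F E) :=
  fun hξ => (Nat.sInf_le ⟨one_pos, by simpa using hξ⟩ : qOrder F ξ ≤ 1).not_gt h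

theorem isPrimitiveRoot_qOrder [Fintype F] (hξ : ξ ≠ 0) (h : qOrder F ξ ≠ 0) :
    IsPrimitiveRoot (ξ ^ (Fintype.card F - 1)) (qOrder F ξ) := by
  have hiff : ∀ l, (ξ ^ (Fintype.card F - 1)) ^ l = 1 ↔ ξ ^ l ∈ Set.range (algebraMap F E) := by
    intro l
    rw [← pow_card_eq_self_iff_mem_range, ← pow_mul, mul_comm, pow_mul,
      ← pow_sub_one_mul Fintype.card_ne_zero (ξ ^ l), mul_eq_right₀]
    simp [hξ]
  rw [IsPrimitiveRoot.iff_orderOf, orderOf_eq_iff (Nat.pos_of_ne_zero h), hiff]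
  exact ⟨pow_qOrder_mem_range h,
    fun m hm hm0 hmem => hm.not_ge (Nat.sInf_le ⟨hm0, (hiff m).1 hmem⟩)⟩

end QOrder

theorem exists_pow_eq_mul_of_mem_powersOf {M : Type*} [CommMonoid M] {ξ ω z : M} {n d : ℕ}
    (hξ : ξ ^ n = ω * ξ) (hω : ω ^ d = 1) (hz : z ∈ powersOf ξ) :
    ∃ α : M, α ^ d = 1 ∧ z ^ n = α * z := by
  obtain ⟨k, rfl⟩ := hz
  refine ⟨ω ^ k, by rw [← pow_mul, mul_comm, pow_mul, hω, one_pow], ?_⟩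
  rw [← pow_mul, mul_comm, pow_mul, hξ, mul_pow]

/-- `h` is the relation `u₂ = (ξ + ω ξ) u₁ - ξ · ω ξ` after applying an automorphism that
scales `u₁ = x` by `α` and `u₂` by `β`. -/
theorem eq_one_of_twisted_recurrence {K : Type*} [Field K] {ω α β ξ x : K}
    (hω : IsPrimitiveRoot ω 3) (hα : α ^ 3 = 1) (hβ : β ^ 3 = 1) (hξ : ξ ≠ 0) (hx : x ≠ 0)
    (hxξ : x ≠ ξ) (hxωξ : x ≠ ω * ξ)
    (h : β * ((ξ + ω * ξ) * x - ξ * (ω * ξ)) = (ξ + ω * ξ) * (α * x) - ξ * (ω * ξ)) :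
    α = 1 := by
  have hsum : 1 + ω + ω ^ 2 = 0 := by
    simpa [Finset.sum_range_succ] using hω.geom_sum_eq_zero (by norm_num)
  have hω1 : ω ≠ 1 := hω.ne_one (by norm_num)
  have hω0 : ω ≠ 0 := hω.ne_zero (by norm_num)
  have hkey : ω * (α - β) * x = (β - 1) * ξ := by
    have : ω * ξ * (ω * (α - β) * x - (β - 1) * ξ) = 0 := by
      linear_combination h + ξ * x * (α - β) * hsum
    simpa [hω0, hξ, sub_eq_zero] using this
  obtain ⟨i, hi, rfl⟩ := hω.eq_pow_of_pow_eq_one hα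
  obtain ⟨j, hj, rfl⟩ := hω.eq_pow_of_pow_eq_one hβ
  interval_cases i
  · exact pow_zero ω
  -- in the six cases `α ≠ 1`, `hkey` forces `x = 0`, `x = ξ`, `x = ω ξ` or `ξ = 0`
  all_goals exfalso; interval_cases j
  all_goals grind

namespace IsLRS

variable {F E : Type*} [Field F] [Field E] [Algebra F E] {f : F[X]} {u v : ℕ → E}

theorem comp_algHom (hu : IsLRS f u) (σ : E →ₐ[F] E) : IsLRS f (σ ∘ u) := by
  intro k
  simp [hu k, map_sum]

theorem ext_s16 (hu : IsLRS f u) (hv : IsLRS f v) (h : ∀ i < f.natDegree, u i = v i) : u = v := by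
  funext n
  induction n using Nat.strong_induction_on with
  | _ n ih =>
    rcases lt_or_ge n f.natDegree with hn | hn
    · exact h n hn
    · obtain ⟨k, rfl⟩ := Nat.exists_eq_add_of_le' hn
      rw [hu k, hv k]
      refine Finset.sum_congr rfl fun i hi => ?_
      rw [ih (k + i) (by simp at hi; omega)]

theorem forall_mem_range [Fintype F] (hu : IsLRS f u)
    (h : ∀ i < f.natDegree, u i ∈ Set.range (algebraMap F E)) (n : ℕ) :
    u n ∈ Set.range (algebraMap F E) := by
  have hfix : FiniteField.frobeniusAlgHom F E ∘ u = u :=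
    (hu.comp_algHom _).ext_s16 hu fun i hi => pow_card_eq_self_iff_mem_range.2 (h i hi)
  exact pow_card_eq_self_iff_mem_range.1 (congrFun hfix n)

end IsLRS

section Quadratic

variable {F E : Type*} [Field F] [Field E] [Algebra F E] {f : F[X]}

theorem Polynomial.Monic.aeval_of_natDegree_eq_two (hf : f.Monic) (hdeg : f.natDegree = 2)
    (z : E) : aeval z f = z ^ 2 + algebraMap F E (f.coeff 1) * z + algebraMap F E (f.coeff 0) := by
  rw [aeval_eq_sum_range, hdeg, Finset.sum_range_succ, Finset.sum_range_succ,
    Finset.sum_range_one, ← hdeg, hf.coeff_natDegree]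
  simp only [Algebra.smul_def, map_one]
  ring

theorem Polynomial.Monic.coeff_of_natDegree_eq_two (hf : f.Monic) (hdeg : f.natDegree = 2)
    {ξ ζ : E} (hξ : aeval ξ f = 0) (hζ : aeval ζ f = 0) (hne : ξ ≠ ζ) :
    algebraMap F E (f.coeff 1) = -(ξ + ζ) ∧ algebraMap F E (f.coeff 0) = ξ * ζ := by
  rw [hf.aeval_of_natDegree_eq_two hdeg] at hξ hζ
  have h1 : algebraMap F E (f.coeff 1) = -(ξ + ζ) := by
    have : (ξ - ζ) * (algebraMap F E (f.coeff 1) + ξ + ζ) = 0 := by linear_combination hξ - hζ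
    linear_combination (mul_eq_zero.1 this).resolve_left (sub_ne_zero.2 hne)
  exact ⟨h1, by linear_combination hξ - ξ * h1⟩

theorem IsLRS.eq_of_natDegree_eq_two {u : ℕ → E} (hu : IsLRS f u) (hf : f.Monic)
    (hdeg : f.natDegree = 2) {ξ ζ : E} (hξ : aeval ξ f = 0) (hζ : aeval ζ f = 0) (hne : ξ ≠ ζ)
    (k : ℕ) : u (k + 2) = (ξ + ζ) * u (k + 1) - ξ * ζ * u k := by
  obtain ⟨h1, h0⟩ := hf.coeff_of_natDegree_eq_two hdeg hξ hζ hne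
  have := hu k
  rw [hdeg, Finset.sum_range_succ, Finset.sum_range_one] at this
  simp only [map_neg, h1, h0, add_zero] at this
  linear_combination this

theorem IsLRS.pow_card_eq_self_of_natDegree_eq_two [Fintype F] {u : ℕ → E} (hu : IsLRS f u)
    (hf : f.Monic) (hdeg : f.natDegree = 2) {ξ ω : E} (hω : IsPrimitiveRoot ω 3) (hξ : ξ ≠ 0)
    (hξq : ξ ^ Fintype.card F = ω * ξ) (hroot : aeval ξ f = 0) (hu0 : u 0 = 1)
    (hmem : ∀ n, u n ∈ powersOf ξ) (hne : ∀ ζ, aeval ζ f = 0 → u 1 ≠ ζ) :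
    u 1 ^ Fintype.card F = u 1 := by
  set σ := FiniteField.frobeniusAlgHom F E
  have hωroot : aeval (ω * ξ) f = 0 := by
    rw [← hξq, ← FiniteField.frobeniusAlgHom_apply, aeval_algHom_apply, hroot, map_zero]
  have hξωξ : ξ ≠ ω * ξ := fun h =>
    hω.ne_one (by norm_num) (mul_right_cancel₀ hξ (by rw [one_mul]; exact h.symm))
  obtain ⟨α, hα, hαu⟩ := exists_pow_eq_mul_of_mem_powersOf hξq hω.pow_eq_one (hmem 1)
  obtain ⟨β, hβ, hβu⟩ := exists_pow_eq_mul_of_mem_powersOf hξq hω.pow_eq_one (hmem 2)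
  have hrec := hu.eq_of_natDegree_eq_two hf hdeg hroot hωroot hξωξ 0
  have hσrec := (hu.comp_algHom σ).eq_of_natDegree_eq_two hf hdeg hroot hωroot hξωξ 0
  simp only [Function.comp_apply, σ, FiniteField.frobeniusAlgHom_apply, hαu, hβu, hu0,
    one_pow, mul_one, zero_add] at hσrec hrec
  have hu1 : u 1 ≠ 0 := by
    obtain ⟨k, hk⟩ := hmem 1
    exact hk ▸ pow_ne_zero k hξ
  rw [hαu, eq_one_of_twisted_recurrence hω hα hβ hξ hu1 (hne ξ hroot) (hne _ hωroot)
    (by rwa [hrec] at hσrec), one_mul]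

end Quadratic

theorem no_nonstandard_qOrder_three_general {F E : Type*} [Field F] [Fintype F] [Field E]
    [Algebra F E] (ξ : E) :
    ¬ (IsNonstandard F 2 ξ ∧ qOrder F ξ = 3) := by
  rintro ⟨⟨hdeg, u, hu, -, hrange, hu0, hstd⟩, hord⟩
  have hξF : ξ ∉ Set.range (algebraMap F E) := notMem_range_of_one_lt_qOrder (by omega)
  have hξ0 : ξ ≠ 0 := fun h => hξF ⟨0, by simp [h]⟩
  have hω := hord ▸ isPrimitiveRoot_qOrder hξ0 (by omega)
  have hf : (minpoly F ξ).Monic :=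
    minpoly.monic (minpoly.ne_zero_iff.1 fun h => by simp [h] at hdeg)
  have hne : ∀ ζ, aeval ζ (minpoly F ξ) = 0 → u 1 ≠ ζ := fun ζ hζ => by
    obtain ⟨i, hi⟩ := hstd ζ hζ
    fin_cases i
    · simp [hu0] at hi
    · simpa using hi
  have hu1 := hu.pow_card_eq_self_of_natDegree_eq_two hf hdeg hω hξ0
    (pow_sub_one_mul Fintype.card_ne_zero ξ).symm (minpoly.aeval F ξ) hu0
    (fun n => hrange ▸ ⟨n, rfl⟩) hne
  have hF := hu.forall_mem_range fun i hi => by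
    rw [hdeg] at hi
    interval_cases i
    · exact ⟨1, by simp [hu0]⟩
    · exact pow_card_eq_self_iff_mem_range.1 hu1
  obtain ⟨k, hk⟩ : ξ ∈ Set.range u := hrange ▸ ⟨1, (pow_one ξ).symm⟩
  exact hξF (hk ▸ hF k)

/-- there is no nonstandard element of degree `2` over `GF(q)` with
`q`-order `3`. -/
theorem no_nonstandard_qOrder_three {F E : Type*} [Field F] [Fintype F] [Field E] [Fintype E]
    [Algebra F E] (hrank : Module.finrank F E = 2) (ξ : E) :
    ¬ (IsNonstandard F 2 ξ ∧ qOrder F ξ = 3) :=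
  no_nonstandard_qOrder_three_general ξ
end

section
/- Let q be a prime power of characteristic p, and let ξ be nonstandard of degree 2 over GF(q) with q-order ord_q(ξ) = 4 and minimal polynomial x² − σ_1 x − σ_0 over GF(q) (necessarily σ_1 ≠ 0). Then p = 3 and ξ/σ_1 has multiplicative order 8, i.e., ξ/σ_1 is a primitive element of the subfield GF(9) of GF(q²). -/
open Polynomial

/-!
Write `q = |F|`, `a = σ₁`, `b = σ₀`. Since `ξ⁴ = a(a² + 2b)ξ + b(a² + b)` lies in `F` while `ξ` and
`ξ²` do not, `a ≠ 0` and `a² + 2b = 0`; so the characteristic is odd, the conjugate of `ξ` is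
`ξ^q = a - ξ`, and `η = ξ^(q-1)` satisfies `η² = -1`, `η^q = -η`. The `f`-sequence is
`u_k = Aξ^k + Bξ^(qk) = ξ^k (A + Bη^k)` with `A + B = 1`, and nonstandardness means `A, B ≠ 0`.
Raising `u_k = ξ^i` to the power `q - 1` shows that `x_j = η^j (A + Bη^j)^(q-1)`, `j < 4`, takes
every value `η^i`, while the Frobenius gives `x_j = (A^q η^j + B^q) / (A + Bη^j)`: the Möbius map
`z ↦ (A^q z + B^q) / (Bz + A)` permutes the fourth roots of unity and fixes `1`. Of these
permutations, the identity and `z ↦ z⁻¹` would force `B = 0` or `A = 0`, and the other four force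
`3 = 0`. Finally `b = a²` in characteristic `3`, so `θ = ξ/a` satisfies `θ² = θ + 1`, hence
`θ⁴ = -1`.
-/

theorem eq_add_pow_of_recurrence {K : Type*} [Field K] {a b x y : K} {u : ℕ → K} (hxy : x ≠ y)
    (hx : x ^ 2 = a * x + b) (hy : y ^ 2 = a * y + b)
    (hu : ∀ k, u (k + 2) = a * u (k + 1) + b * u k) :
    ∃ A B : K, A + B = u 0 ∧ A * x + B * y = u 1 ∧ ∀ k, u k = A * x ^ k + B * y ^ k := by
  have hxy' : x - y ≠ 0 := sub_ne_zero.2 hxy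
  refine ⟨(u 1 - y * u 0) / (x - y), (x * u 0 - u 1) / (x - y), ?_, ?_, fun k => ?_⟩
  · field_simp; ring
  · field_simp; ring
  induction k using Nat.strong_induction_on with
  | _ k ih =>
    match k, ih with
    | 0, _ => field_simp; ring
    | 1, _ => field_simp; ring
    | k + 2, ih =>
      rw [hu, ih k (by omega), ih (k + 1) (by omega)]
      linear_combination (-((u 1 - y * u 0) / (x - y)) * x ^ k) * hx
        - ((x * u 0 - u 1) / (x - y) * y ^ k) * hy

theorem exists_lt_four_pow_mul_eq {K : Type*} [CommRing K] {ξ η A B : K} {u : ℕ → K} {n : ℕ}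
    (hη : η ^ 4 = 1) (hξ : ξ ^ n = η) (hu : ∀ k, u k = ξ ^ k * (A + B * η ^ k))
    (hrange : Set.range u = powersOf ξ) (i : ℕ) :
    ∃ j < 4, η ^ j * (A + B * η ^ j) ^ n = η ^ i := by
  obtain ⟨k, hk⟩ : ξ ^ i ∈ Set.range u := hrange ▸ ⟨i, rfl⟩
  refine ⟨k % 4, Nat.mod_lt _ (by norm_num), ?_⟩
  rw [← pow_eq_pow_mod k hη]
  calc η ^ k * (A + B * η ^ k) ^ n = (ξ ^ k * (A + B * η ^ k)) ^ n := by
        rw [mul_pow, ← pow_mul, mul_comm k n, pow_mul, hξ]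
    _ = η ^ i := by rw [← hu, hk, ← pow_mul, mul_comm, pow_mul, hξ]

theorem twelve_mul_mul_eq_zero_of_cover {K : Type*} [CommRing K] {η A B α β : K} {x : ℕ → K}
    (hη : η ^ 2 = -1) (hAB : A + B = 1) (hαβ : α + β = 1)
    (hx : ∀ j, α * η ^ j + β = x j * (A + B * η ^ j))
    (hcover : ∀ i, ∃ j < 4, x j = η ^ i) : 12 * A * B = 0 := by
  have hη3 : η ^ 3 = -η := by linear_combination η * hη
  have h0 := hx 0
  have h1 := hx 1
  have h2 := hx 2
  have h3 := hx 3
  obtain ⟨j1, hj1, e1⟩ := hcover 1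
  obtain ⟨j2, hj2, e2⟩ := hcover 2
  obtain ⟨j3, hj3, e3⟩ := hcover 3
  simp only [pow_zero, pow_one, hη, hη3, mul_one] at h0 h1 h2 h3 e1 e2 e3
  -- one case for each choice of the preimages of `η`, `η²`, `η³` under `x`
  interval_cases j1 <;> interval_cases j2 <;> interval_cases j3 <;> grind

theorem three_eq_zero_of_cover {K : Type*} [Field K] {η A B α β : K} {x : ℕ → K}
    (h2 : (2 : K) ≠ 0) (hη : η ^ 2 = -1) (hA : A ≠ 0) (hB : B ≠ 0) (hAB : A + B = 1)
    (hαβ : α + β = 1) (hx : ∀ j, α * η ^ j + β = x j * (A + B * η ^ j))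
    (hcover : ∀ i, ∃ j < 4, x j = η ^ i) : (3 : K) = 0 := by
  have h12 := twelve_mul_mul_eq_zero_of_cover hη hAB hαβ hx hcover
  have : (2 : K) * 2 * 3 * A * B = 0 := by linear_combination h12
  simpa [h2, hA, hB] using this

theorem orderOf_eq_eight_of_sq_eq_add_one {K : Type*} [Field K] {θ : K} (h3 : (3 : K) = 0)
    (hθ : θ ^ 2 = θ + 1) : orderOf θ = 8 := by
  have hθ4 : θ ^ 4 = -1 := by linear_combination (θ ^ 2 + θ + 2) * hθ + (θ + 1) * h3
  have hne : (-1 : K) ≠ 1 := by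
    intro h
    have : (1 : K) = 0 := by linear_combination h + h3
    exact one_ne_zero this
  exact orderOf_eq_prime_pow (p := 2) (n := 2) (by norm_num [hθ4, hne])
    (by norm_num [show θ ^ 8 = (θ ^ 4) ^ 2 by ring, hθ4])

section QOrder

variable {F E : Type*} [Field F] [Field E] [Algebra F E] {ξ : E}

theorem pow_notMem_range_of_lt_qOrder {k : ℕ} (hk : 0 < k) (hlt : k < qOrder F ξ) :
    ξ ^ k ∉ Set.range (algebraMap F E) :=
  fun hmem => (Nat.sInf_le (⟨hk, hmem⟩ : 0 < k ∧ _)).not_gt hlt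

end QOrder

section Quadratic

variable {F E : Type*} [Field F] [Field E] [Algebra F E]

theorem aeval_quadratic (σ1 σ0 : F) (ζ : E) :
    aeval ζ (X ^ 2 - C σ1 * X - C σ0) = ζ ^ 2 - algebraMap F E σ1 * ζ - algebraMap F E σ0 := by
  simp

theorem sq_eq_of_minpoly_eq {ξ : E} {σ1 σ0 : F} (hmin : minpoly F ξ = X ^ 2 - C σ1 * X - C σ0) :
    ξ ^ 2 = algebraMap F E σ1 * ξ + algebraMap F E σ0 := by
  linear_combination (aeval_quadratic σ1 σ0 ξ).symm.trans (hmin ▸ minpoly.aeval F ξ)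

theorem IsLRS.add_two_of_quadratic {σ1 σ0 : F} {u : ℕ → E}
    (h : IsLRS (X ^ 2 - C σ1 * X - C σ0) u) (k : ℕ) :
    u (k + 2) = algebraMap F E σ1 * u (k + 1) + algebraMap F E σ0 * u k := by
  have hdeg : (X ^ 2 - C σ1 * X - C σ0 : F[X]).natDegree = 2 := by compute_degree!
  have hk := h k
  rw [hdeg, Finset.sum_range_succ, Finset.sum_range_one] at hk
  simpa [add_comm] using hk

theorem eq_zero_of_algebraMap_mul_add_mem_range {ξ : E} (hξ : ξ ∉ Set.range (algebraMap F E))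
    {c d : F} (h : algebraMap F E c * ξ + algebraMap F E d ∈ Set.range (algebraMap F E)) :
    c = 0 := by
  by_contra hc
  obtain ⟨e, he⟩ := h
  have hc' : algebraMap F E c ≠ 0 := by simpa using hc
  refine hξ ⟨(e - d) / c, ?_⟩
  rw [map_div₀, map_sub, he]
  field_simp
  ring

theorem coeffs_of_qOrder_eq_four {ξ : E} {σ1 σ0 : F}
    (hξ : ξ ^ 2 = algebraMap F E σ1 * ξ + algebraMap F E σ0) (hd : qOrder F ξ = 4) :
    σ1 ≠ 0 ∧ σ1 ^ 2 + 2 * σ0 = 0 := by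
  have hξF : ξ ∉ Set.range (algebraMap F E) := by
    simpa using pow_notMem_range_of_lt_qOrder (F := F) (ξ := ξ) one_pos (by omega)
  have hσ1 : σ1 ≠ 0 := by
    rintro rfl
    exact pow_notMem_range_of_lt_qOrder (ξ := ξ) two_pos (by omega) ⟨σ0, by simp [hξ]⟩
  have hξ4 : ξ ^ 4 = algebraMap F E (σ1 * (σ1 ^ 2 + 2 * σ0)) * ξ
      + algebraMap F E (σ0 * (σ1 ^ 2 + σ0)) := by
    simp only [map_mul, map_add, map_pow, map_ofNat]
    linear_combination (ξ ^ 2 + algebraMap F E σ1 * ξ + algebraMap F E σ1 ^ 2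
      + algebraMap F E σ0) * hξ
  have hmem : ξ ^ 4 ∈ Set.range (algebraMap F E) := hd ▸ pow_qOrder_mem_range (by omega)
  rw [hξ4] at hmem
  exact ⟨hσ1, (mul_eq_zero.1 (eq_zero_of_algebraMap_mul_add_mem_range hξF hmem)).resolve_left hσ1⟩

end Quadratic

section Frobenius

variable {F E : Type*} [Field F] [Fintype F] [Field E] [Algebra F E]

theorem mem_range_algebraMap_of_pow_card_eq {z : E} (hz : z ^ Fintype.card F = z) :
    z ∈ Set.range (algebraMap F E) := by
  classical
  have hq : 1 < Fintype.card F := Fintype.one_lt_card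
  have hprod : ((Finset.univ.val : Multiset F).map fun a => X - C a).prod
      = (X ^ Fintype.card F - X : F[X]) := by
    rw [← FiniteField.roots_X_pow_card_sub_X]
    refine prod_multiset_X_sub_C_of_monic_of_roots_card_eq
      (monic_X_pow_sub (by rw [degree_X]; exact_mod_cast hq)) ?_
    rw [FiniteField.roots_X_pow_card_sub_X, FiniteField.X_pow_card_sub_X_natDegree_eq F hq]
    rfl
  have hzero := congrArg (aeval z) hprod
  simp only [map_multiset_prod, Multiset.map_map, Function.comp_def, map_sub, aeval_X, aeval_C,
    map_pow, hz, sub_self, Multiset.prod_eq_zero_iff, Multiset.mem_map, sub_eq_zero] at hzero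
  obtain ⟨a, -, ha⟩ := hzero
  exact ⟨a, ha.symm⟩

theorem pow_card_eq_sub_of_sq_eq {ξ : E} {s t : F} (hξ : ξ ∉ Set.range (algebraMap F E))
    (h : ξ ^ 2 = algebraMap F E s * ξ + algebraMap F E t) :
    ξ ^ Fintype.card F = algebraMap F E s - ξ := by
  have hφ : (ξ ^ Fintype.card F) ^ 2
      = algebraMap F E s * ξ ^ Fintype.card F + algebraMap F E t := by
    have := congrArg (FiniteField.frobeniusAlgHom F E) h
    rwa [map_pow, map_add, map_mul, AlgHom.commutes, AlgHom.commutes] at this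
  have hne : ξ ^ Fintype.card F - ξ ≠ 0 :=
    sub_ne_zero.2 fun h' => hξ (mem_range_algebraMap_of_pow_card_eq h')
  have hfac : (ξ ^ Fintype.card F - ξ) * (ξ ^ Fintype.card F - (algebraMap F E s - ξ)) = 0 := by
    linear_combination hφ - h
  exact sub_eq_zero.1 ((mul_eq_zero.1 hfac).resolve_left hne)

theorem sq_pow_card_sub_one_eq_neg_one {ξ : E} {s t : F} (hξ0 : ξ ≠ 0)
    (h : ξ ^ 2 = algebraMap F E s * ξ + algebraMap F E t)
    (hconj : ξ ^ Fintype.card F = algebraMap F E s - ξ) (hst : s ^ 2 + 2 * t = 0) :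
    (ξ ^ (Fintype.card F - 1)) ^ 2 = -1 := by
  have hst' : algebraMap F E s ^ 2 + 2 * algebraMap F E t = 0 := by
    simpa [map_ofNat] using congrArg (algebraMap F E) hst
  have hξη : ξ * ξ ^ (Fintype.card F - 1) = algebraMap F E s - ξ := by
    rw [← pow_succ', Nat.sub_add_cancel Fintype.card_pos, hconj]
  have : ξ ^ 2 * ((ξ ^ (Fintype.card F - 1)) ^ 2 + 1) = 0 := by
    linear_combination (ξ * ξ ^ (Fintype.card F - 1) + algebraMap F E s - ξ) * hξη + 2 * h + hst'
  simpa [hξ0, add_eq_zero_iff_eq_neg] using this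

theorem pow_card_sub_one_pow_card {ξ : E} {s : F} (hξ0 : ξ ≠ 0)
    (hconj : ξ ^ Fintype.card F = algebraMap F E s - ξ)
    (hη : (ξ ^ (Fintype.card F - 1)) ^ 2 = -1) :
    (ξ ^ (Fintype.card F - 1)) ^ Fintype.card F = -ξ ^ (Fintype.card F - 1) := by
  set η := ξ ^ (Fintype.card F - 1)
  have hξη : ξ ^ Fintype.card F = ξ * η := by
    rw [← pow_succ', Nat.sub_add_cancel Fintype.card_pos]
  have hinv : (ξ ^ Fintype.card F) ^ Fintype.card F = ξ := by
    rw [hconj]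
    change FiniteField.frobeniusAlgHom F E (algebraMap F E s - ξ) = ξ
    rw [map_sub, AlgHom.commutes]
    change algebraMap F E s - ξ ^ Fintype.card F = ξ
    rw [hconj, sub_sub_cancel]
  rw [hξη, mul_pow, hξη, mul_assoc] at hinv
  have : η * η ^ Fintype.card F = 1 := mul_left_cancel₀ hξ0 (hinv.trans (mul_one ξ).symm)
  linear_combination η ^ Fintype.card F * hη - η * this

theorem pow_card_mul_pow_add_pow_card {η : E} (hη : η ^ 2 = -1)
    (hηq : η ^ Fintype.card F = -η) (A B : E) (j : ℕ) :
    A ^ Fintype.card F * η ^ j + B ^ Fintype.card F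
      = η ^ j * (A + B * η ^ j) ^ (Fintype.card F - 1) * (A + B * η ^ j) := by
  have hfrob : (A + B * η ^ j) ^ Fintype.card F
      = A ^ Fintype.card F + B ^ Fintype.card F * (-η) ^ j := by
    rw [← hηq]
    change FiniteField.frobeniusAlgHom F E (A + B * η ^ j) = FiniteField.frobeniusAlgHom F E A
      + FiniteField.frobeniusAlgHom F E B * (FiniteField.frobeniusAlgHom F E η) ^ j
    rw [map_add, map_mul, map_pow]
  rw [mul_assoc, ← pow_succ, Nat.sub_add_cancel Fintype.card_pos, hfrob, mul_add,
    mul_left_comm, ← mul_pow, mul_neg, ← sq, hη, neg_neg, one_pow]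
  ring

theorem three_eq_zero_of_range_eq {ξ η A B : E} {u : ℕ → E} (h2 : (2 : E) ≠ 0)
    (hη : η ^ 2 = -1) (hηq : η ^ Fintype.card F = -η) (hξη : ξ ^ (Fintype.card F - 1) = η)
    (hA : A ≠ 0) (hB : B ≠ 0) (hAB : A + B = 1) (hu : ∀ k, u k = ξ ^ k * (A + B * η ^ k))
    (hrange : Set.range u = powersOf ξ) : (3 : E) = 0 := by
  have hαβ : A ^ Fintype.card F + B ^ Fintype.card F = 1 := by
    simpa [hAB] using pow_card_mul_pow_add_pow_card hη hηq A B 0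
  exact three_eq_zero_of_cover h2 hη hA hB hAB hαβ (pow_card_mul_pow_add_pow_card hη hηq A B)
    (exists_lt_four_pow_mul_eq (by linear_combination (η ^ 2 - 1) * hη) hξη hu hrange)

end Frobenius

theorem three_eq_zero_of_isNonstandard {F E : Type*} [Field F] [Fintype F] [Field E]
    [Algebra F E] {ξ : E} {σ1 σ0 : F} (hmin : minpoly F ξ = X ^ 2 - C σ1 * X - C σ0)
    (hns : IsNonstandard F 2 ξ) (hd : qOrder F ξ = 4) : (3 : E) = 0 := by
  obtain ⟨-, u, hLRS, -, hrange, hu0, hNS⟩ := hns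
  rw [hmin] at hLRS hNS
  set a := algebraMap F E σ1
  set b := algebraMap F E σ0
  have hroot : ∀ ζ : E, ζ ^ 2 = a * ζ + b → u 1 ≠ ζ := fun ζ hζ h1 => by
    obtain ⟨i, hi⟩ := hNS ζ (by rw [aeval_quadratic]; linear_combination hζ)
    fin_cases i <;> simp_all
  have hξ2 : ξ ^ 2 = a * ξ + b := sq_eq_of_minpoly_eq hmin
  have hξF : ξ ∉ Set.range (algebraMap F E) := by
    simpa using pow_notMem_range_of_lt_qOrder (F := F) (ξ := ξ) one_pos (by omega)
  have hξ0 : ξ ≠ 0 := by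
    rintro rfl
    exact hξF ⟨0, map_zero _⟩
  obtain ⟨hσ1, hσ⟩ := coeffs_of_qOrder_eq_four hξ2 hd
  have h2 : (2 : E) ≠ 0 := by
    intro h
    apply hσ1
    have h2F : (2 : F) = 0 := (algebraMap F E).injective (by rwa [map_ofNat, map_zero])
    simpa [h2F] using hσ
  have hconj := pow_card_eq_sub_of_sq_eq hξF hξ2
  have hη2 := sq_pow_card_sub_one_eq_neg_one hξ0 hξ2 hconj hσ
  have hηq := pow_card_sub_one_pow_card hξ0 hconj hη2
  set η := ξ ^ (Fintype.card F - 1)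
  have hξη : ξ ^ Fintype.card F = ξ * η := by
    rw [← pow_succ', Nat.sub_add_cancel Fintype.card_pos]
  have hconj2 : (ξ * η) ^ 2 = a * (ξ * η) + b := by
    linear_combination (ξ * η - ξ) * hξη.symm.trans hconj + hξ2
  have hne : ξ ≠ ξ * η := fun h => hξF (mem_range_algebraMap_of_pow_card_eq (hξη.trans h.symm))
  obtain ⟨A, B, hAB, hu1, hu⟩ := eq_add_pow_of_recurrence hne hξ2 hconj2 hLRS.add_two_of_quadratic
  rw [hu0] at hAB
  have hA : A ≠ 0 := by
    rintro rfl
    exact hroot _ hconj2 (by rw [← hu1]; linear_combination (ξ * η) * hAB)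
  have hB : B ≠ 0 := by
    rintro rfl
    exact hroot _ hξ2 (by rw [← hu1]; linear_combination ξ * hAB)
  exact three_eq_zero_of_range_eq h2 hη2 hηq rfl hA hB hAB (fun k => by rw [hu, mul_pow]; ring)
    hrange

theorem nonstandard_qOrder_four_general {F E : Type*} [Field F] [Fintype F] [Field E]
    [Algebra F E]
    (ξ : E) (σ1 σ0 : F)
    (hmin : minpoly F ξ = X ^ 2 - C σ1 * X - C σ0)
    (hns : IsNonstandard F 2 ξ) (hd : qOrder F ξ = 4) :
    ringChar F = 3 ∧ σ1 ≠ 0 ∧ orderOf (ξ / algebraMap F E σ1) = 8 := by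
  have hξ2 := sq_eq_of_minpoly_eq hmin
  obtain ⟨hσ1, hσ⟩ := coeffs_of_qOrder_eq_four hξ2 hd
  have h3E := three_eq_zero_of_isNonstandard hmin hns hd
  have h3 : (3 : F) = 0 := (algebraMap F E).injective (by rwa [map_ofNat, map_zero])
  have hσ0 : σ0 = σ1 ^ 2 := by linear_combination σ0 * h3 - hσ
  have hσ1E : algebraMap F E σ1 ≠ 0 := by simpa using hσ1
  have hchar : CharP F 3 := (CharP.charP_iff_prime_eq_zero Nat.prime_three).2 (by exact_mod_cast h3)
  refine ⟨ringChar.eq_iff.2 hchar, hσ1, orderOf_eq_eight_of_sq_eq_add_one h3E ?_⟩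
  rw [hσ0, map_pow] at hξ2
  field_simp
  linear_combination hξ2

/-- if `ξ` is nonstandard of degree `2` over `GF(q)` (characteristic `p`)
with `q`-order `4` and minimal polynomial `x² - σ₁x - σ₀` (necessarily `σ₁ ≠ 0`), then
`p = 3` and `ξ/σ₁` has multiplicative order `8`, i.e. `ξ/σ₁` is a primitive element of
the subfield `GF(9)` of `GF(q²)`. -/
theorem nonstandard_qOrder_four {F E : Type*} [Field F] [Fintype F] [Field E] [Fintype E]
    [Algebra F E] (hrank : Module.finrank F E = 2)
    (ξ : E) (σ1 σ0 : F)
    (hmin : minpoly F ξ = X ^ 2 - C σ1 * X - C σ0)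
    (hns : IsNonstandard F 2 ξ) (hd : qOrder F ξ = 4) :
    ringChar F = 3 ∧ σ1 ≠ 0 ∧ orderOf (ξ / algebraMap F E σ1) = 8 :=
  nonstandard_qOrder_four_general ξ σ1 σ0 hmin hns hd
end
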